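/- The function f(x) = -e^{1/x} Ei(-1/x) is concave on (0, ∞). -/

import Mathlib

/-!
Substituting `t = s + 1/x` gives `f x = ∫₀^∞ e^{-s} · x / (s x + 1) ds` for `x > 0`. For each
`s ≥ 0` the map `x ↦ x / (s x + 1)` is concave, and an integral of concave functions against a
positive measure is concave.
-/

open MeasureTheory

/-- The exponential integral: for `z < 0`, `Ei z = -∫_{-z}^∞ e^{-t}/t dt`. -/
noncomputable def Ei (z : ℝ) : ℝ := -(∫ t in Set.Ioi (-z), Real.exp (-t) / t)

noncomputable def f (x : ℝ) : ℝ := -Real.exp (1/x) * Ei (-(1/x))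

open Set Real

theorem concaveOn_integral {α E : Type*} [MeasurableSpace α] {μ : Measure α} [AddCommGroup E]
    [Module ℝ E] {s : Set E} {F : E → α → ℝ} (hs : Convex ℝ s)
    (hF : ∀ᵐ a ∂μ, ConcaveOn ℝ s (F · a)) (hint : ∀ x ∈ s, Integrable (F x) μ) :
    ConcaveOn ℝ s fun x => ∫ a, F x a ∂μ := by
  refine ⟨hs, fun x hx y hy p q hp hq hpq => ?_⟩
  rw [← integral_smul, ← integral_smul,
    ← integral_add (by exact (hint x hx).smul p) (by exact (hint y hy).smul q)]
  refine integral_mono_ae (((hint x hx).smul p).add ((hint y hy).smul q))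
    (hint _ (hs hx hy hp hq hpq)) ?_
  filter_upwards [hF] with a ha using ha.2 hx hy hp hq hpq

theorem setIntegral_Ioi_comp_add_right {E : Type*} [NormedAddCommGroup E] [NormedSpace ℝ E]
    (g : ℝ → E) (a b : ℝ) : ∫ t in Ioi a, g (t + b) = ∫ t in Ioi (a + b), g t := by
  have := (measurePreserving_add_right volume b).setIntegral_preimage_emb
    (measurableEmbedding_addRight b) g (Ioi (a + b))
  rwa [preimage_add_const_Ioi, add_sub_cancel_right] at this

theorem concaveOn_div_mul_add_one {s : ℝ} (hs : 0 ≤ s) :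
    ConcaveOn ℝ (Ici 0) fun x => x / (s * x + 1) := by
  refine ⟨convex_Ici 0, fun a (ha : 0 ≤ a) b (hb : 0 ≤ b) p q hp hq hpq => ?_⟩
  have hA : 0 < s * a + 1 := by positivity
  have hB : 0 < s * b + 1 := by positivity
  have hC : 0 < s * (p * a + q * b) + 1 := by positivity
  simp only [smul_eq_mul]
  rw [mul_div_assoc', mul_div_assoc', div_add_div _ _ hA.ne' hB.ne',
    div_le_div_iff₀ (by positivity) hC]
  obtain rfl : q = 1 - p := by linarith
  nlinarith [mul_nonneg (mul_nonneg (mul_nonneg hp hq) hs) (sq_nonneg (a - b))]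

theorem integrableOn_exp_neg_mul_div {x : ℝ} (hx : 0 ≤ x) :
    IntegrableOn (fun s => exp (-s) * (x / (s * x + 1))) (Ioi 0) := by
  refine (integrableOn_exp_neg_Ioi 0).mul_bdd (c := x) ?_ ?_
  · refine ContinuousOn.aestronglyMeasurable ?_ measurableSet_Ioi
    exact continuousOn_const.div (by fun_prop) fun s (hs : 0 < s) => by positivity
  · filter_upwards [ae_restrict_mem measurableSet_Ioi] with s (hs : 0 < s)
    rw [norm_of_nonneg (by positivity), div_le_iff₀ (by positivity)]
    nlinarith [mul_nonneg (mul_nonneg hs.le hx) hx]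

theorem f_eq_integral {x : ℝ} (hx : 0 < x) :
    f x = ∫ s in Ioi 0, exp (-s) * (x / (s * x + 1)) := by
  rw [f, Ei, neg_neg, neg_mul, mul_neg, neg_neg, ← zero_add (1 / x),
    ← setIntegral_Ioi_comp_add_right, ← integral_const_mul]
  refine setIntegral_congr_fun measurableSet_Ioi fun s (hs : 0 < s) => ?_
  rw [zero_add, neg_add, exp_add, exp_neg (1 / x)]
  field_simp

/-- `f` is concave on `(0,∞)`. -/
theorem stmt_5 : ConcaveOn ℝ (Set.Ioi 0) f := by
  refine (concaveOn_integral (convex_Ioi 0) ?_ fun x hx =>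
    integrableOn_exp_neg_mul_div (le_of_lt hx)).congr fun x hx => (f_eq_integral hx).symm
  filter_upwards [ae_restrict_mem measurableSet_Ioi] with s (hs : 0 < s)
  exact ((concaveOn_div_mul_add_one hs.le).subset Ioi_subset_Ici_self (convex_Ioi 0)).smul
    (exp_pos _).le
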